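/- Suppose R contains ℚ (R is a ℚ-algebra) and let λ : R[X_1,…,X_N] → R be an R-linear map such that λ(M_{jk}(p)) = 0 for all pairs of distinct indices j, k ∈ {1,…,N} and all p, and λ((X·X)^n) = 1 for every integer n ≥ 0. If p ∈ R[X_1,…,X_N] is homogeneous of degree d, then (N + d − 1)·λ(X_1·p) = λ(∂p/∂X_1). -/

import Mathlib

open MvPolynomial

/-- The rotation generator `M_{jk} p = X_j ∂_k p − X_k ∂_j p`. -/
noncomputable def rot {R : Type*} [CommRing R] {N : ℕ} (j k : Fin N)
    (p : MvPolynomial (Fin N) R) : MvPolynomial (Fin N) R :=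
  X j * pderiv k p - X k * pderiv j p

/-- The Laplacian `Δ p = Σ_j ∂_j² p`. -/
noncomputable def lap {R : Type*} [CommRing R] {N : ℕ}
    (p : MvPolynomial (Fin N) R) : MvPolynomial (Fin N) R :=
  ∑ j, pderiv j (pderiv j p)

/-- The polynomial `X·X = X_1² + ⋯ + X_N²`. -/
noncomputable def XX (R : Type*) [CommRing R] (N : ℕ) : MvPolynomial (Fin N) R :=
  ∑ j, X j ^ 2

/-!
Let `λ` kill every `M_{jk}`. Summing `M_{jk}(X_j r)` over `j ≠ k` and using Euler's identity gives
`λ((X·X) ∂_k r) = (N - 1 + e) λ(X_k r)` for `r` homogeneous of degree `e`. With `r = p` this turns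
the claim into `λ((X·X) ∂_1 p) = λ(∂_1 p)`. Applying the same identity to `r = (X·X)^m ∂_k s`
and summing over `k` gives `λ((X·X)^{m+1} Δ s) = d (N + d - 2) λ((X·X)^m s)` for `s` homogeneous
of degree `d ≥ 1`, a factor that is nonzero as `N ≥ 2`. Dividing by it, `λ((X·X)^{m+1} s) = λ((X·X)^m s)`
follows from the same statement for `Δ s`, of smaller degree, by induction down to constants,
where it is the hypothesis `λ((X·X)^n) = 1`.
-/

section Polynomial

variable {R : Type*} [CommRing R] {N : ℕ}

lemma isHomogeneous_XX : (XX R N).IsHomogeneous 2 :=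
  IsHomogeneous.sum _ _ _ fun j _ => isHomogeneous_X_pow j 2

lemma isHomogeneous_lap {s : MvPolynomial (Fin N) R} {e : ℕ} (hs : s.IsHomogeneous e) :
    (lap s).IsHomogeneous (e - 2) :=
  IsHomogeneous.sum _ _ _ fun k _ => by simpa only [Nat.sub_sub] using hs.pderiv.pderiv (i := k)

lemma pderiv_XX (k : Fin N) : pderiv k (XX R N) = 2 * X k := by
  rw [XX, map_sum, Finset.sum_eq_single k]
  · simp
  · intro j _ hj
    simp [pderiv_X_of_ne hj]
  · simp

lemma XX_mul_pderiv_XX_pow_mul (k : Fin N) (m : ℕ) (q : MvPolynomial (Fin N) R) :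
    XX R N * pderiv k (XX R N ^ m * q)
      = XX R N ^ (m + 1) * pderiv k q + (2 * m) • (XX R N ^ m * (X k * q)) := by
  rw [pderiv_mul, pderiv_pow, pderiv_XX, nsmul_eq_mul]
  cases m with
  | zero => simp
  | succ m => push_cast; ring

lemma sum_rot_X_mul {r : MvPolynomial (Fin N) R} {e : ℕ} (hr : r.IsHomogeneous e) (k : Fin N) :
    ∑ j ∈ Finset.univ.erase k, rot j k (X j * r)
      = XX R N * pderiv k r - (N - 1 + e) • (X k * r) := by
  have hterm : ∀ j ∈ Finset.univ.erase k, rot j k (X j * r)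
      = X j ^ 2 * pderiv k r - X k * r - X k * (X j * pderiv j r) := by
    intro j hj
    rw [rot, pderiv_mul, pderiv_mul, pderiv_X_of_ne (Finset.ne_of_mem_erase hj), pderiv_X_self]
    ring
  have hsq : ∑ j ∈ Finset.univ.erase k, X j ^ 2 = XX R N - X k ^ 2 :=
    Finset.sum_erase_eq_sub (Finset.mem_univ k)
  have heuler : ∑ j ∈ Finset.univ.erase k, X j * pderiv j r = e • r - X k * pderiv k r := by
    rw [Finset.sum_erase_eq_sub (Finset.mem_univ k), hr.sum_X_mul_pderiv]
  rw [Finset.sum_congr rfl hterm, Finset.sum_sub_distrib, Finset.sum_sub_distrib,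
    ← Finset.sum_mul, hsq, Finset.sum_const, ← Finset.mul_sum, heuler,
    Finset.card_erase_of_mem (Finset.mem_univ k), Finset.card_univ, Fintype.card_fin]
  simp only [nsmul_eq_mul, Nat.cast_add]
  ring

end Polynomial

section Functional

variable {R : Type*} [CommRing R] {N : ℕ} {M : Type*} [AddCommGroup M] [Module R M]
  (lam : MvPolynomial (Fin N) R →ₗ[R] M) (hrot : ∀ j k : Fin N, j ≠ k → ∀ p, lam (rot j k p) = 0)
include hrot

lemma map_XX_mul_pderiv {r : MvPolynomial (Fin N) R} {e : ℕ} (hr : r.IsHomogeneous e)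
    (k : Fin N) : lam (XX R N * pderiv k r) = (N - 1 + e) • lam (X k * r) := by
  have hzero : lam (∑ j ∈ Finset.univ.erase k, rot j k (X j * r)) = 0 :=
    (map_sum lam _ _).trans <|
      Finset.sum_eq_zero fun j hj => hrot j k (Finset.ne_of_mem_erase hj) _
  rwa [sum_rot_X_mul hr, map_sub, map_nsmul, sub_eq_zero] at hzero

lemma map_XX_pow_succ_mul_lap {s : MvPolynomial (Fin N) R} {e : ℕ}
    (hs : s.IsHomogeneous (e + 1)) (m : ℕ) :
    lam (XX R N ^ (m + 1) * lap s) = ((e + 1) * (N - 1 + e)) • lam (XX R N ^ m * s) := by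
  have hk : ∀ k : Fin N, lam (XX R N ^ (m + 1) * pderiv k (pderiv k s))
      = (N - 1 + e) • lam (XX R N ^ m * (X k * pderiv k s)) := by
    intro k
    have hr : (XX R N ^ m * pderiv k s).IsHomogeneous (2 * m + e) :=
      (isHomogeneous_XX.pow m).mul hs.pderiv
    have h := map_XX_mul_pderiv lam hrot hr k
    rw [XX_mul_pderiv_XX_pow_mul, map_add, map_nsmul, mul_left_comm (X k),
      show N - 1 + (2 * m + e) = N - 1 + e + 2 * m by omega, add_smul] at h
    exact add_right_cancel h
  calc lam (XX R N ^ (m + 1) * lap s)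
      = ∑ k, (N - 1 + e) • lam (XX R N ^ m * (X k * pderiv k s)) := by
        rw [lap, Finset.mul_sum, map_sum]
        exact Finset.sum_congr rfl fun k _ => hk k
    _ = (N - 1 + e) • lam (XX R N ^ m * ((e + 1) • s)) := by
        rw [← Finset.smul_sum, ← map_sum, ← Finset.mul_sum, hs.sum_X_mul_pderiv]
    _ = ((e + 1) * (N - 1 + e)) • lam (XX R N ^ m * s) := by
        rw [mul_smul_comm, map_nsmul, smul_smul, mul_comm]

lemma map_XX_pow_succ_mul [IsAddTorsionFree M] (hN : 2 ≤ N)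
    (hXX : ∀ n, lam (XX R N ^ (n + 1)) = lam (XX R N ^ n)) {s : MvPolynomial (Fin N) R} {e : ℕ}
    (hs : s.IsHomogeneous e) (m : ℕ) : lam (XX R N ^ (m + 1) * s) = lam (XX R N ^ m * s) := by
  induction e using Nat.strong_induction_on generalizing s m with
  | _ e ih =>
    cases e with
    | zero =>
      obtain ⟨c, rfl⟩ : ∃ c, s = C c :=
        ⟨_, totalDegree_eq_zero_iff_eq_C.mp ((totalDegree_zero_iff_isHomogeneous _).mpr hs)⟩
      simp only [mul_comm _ (C c), ← smul_eq_C_mul, map_smul, hXX]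
    | succ e =>
      have hlap := ih (e + 1 - 2) (by omega) (isHomogeneous_lap hs) (m + 1)
      rw [map_XX_pow_succ_mul_lap lam hrot hs, map_XX_pow_succ_mul_lap lam hrot hs] at hlap
      exact nsmul_right_injective (Nat.mul_ne_zero (by omega) (by omega)) hlap

end Functional

/-- for `p` homogeneous of degree `d`,
`(N + d − 1)·λ(X_1·p) = λ(∂p/∂X_1)`. -/
theorem stmt18 {R : Type*} [CommRing R] [Algebra ℚ R] {N : ℕ} (hN : 2 ≤ N)
    (lam : MvPolynomial (Fin N) R →ₗ[R] R)
    (hrot : ∀ (j k : Fin N), j ≠ k → ∀ p, lam (rot j k p) = 0)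
    (hone : ∀ n : ℕ, lam (XX R N ^ n) = 1)
    (d : ℕ) (p : MvPolynomial (Fin N) R) (hp : p.IsHomogeneous d) :
    (N + d - 1) • lam (X (⟨0, by omega⟩ : Fin N) * p) =
      lam (pderiv (⟨0, by omega⟩ : Fin N) p) := by
  have := IsAddTorsionFree.of_module_rat R
  have hstep := map_XX_pow_succ_mul lam hrot hN (fun n => (hone (n + 1)).trans (hone n).symm)
    (hp.pderiv (i := ⟨0, by omega⟩)) 0
  rw [pow_one, pow_zero, one_mul] at hstep
  rw [show N + d - 1 = N - 1 + d by omega, ← map_XX_mul_pderiv lam hrot hp, hstep]
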